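/- arXiv:1810.11810 — 2 statements merged into one kernel-verified Lean document; each statement's English description precedes it below -/
import Mathlib

section
/- Let $(E_n)_{n \geq 1}$ be events with $\mathbf{P}(E_n \text{ i.o.}) = 1$, and let $(F_n)_{n \geq 1}$ be events such that the sigma-algebra generated by all $F_n$ is independent of the sigma-algebra generated by all $E_n$, and $\mathbf{P}(F_n) \geq c > 0$ for all $n > n_0$. Then $\mathbf{P}(E_n \cap F_n \text{ i.o.}) > 0$. -/
open MeasureTheory ProbabilityTheory Filter ENNReal

/-
Fix `m > n₀` and split the tail event `⋃_{n ≥ m} E_n`, which has probability one, according to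
the first index `n ≥ m` with `E_n` occurring. These first-entrance events are disjoint and lie in
`σ(E)`, so by independence `P(⋃_{n ≥ m} E_n ∩ F_n) ≥ ∑_n P(first entrance at n) P(F_n) ≥ c`.
Letting `m → ∞` gives `P(E_n ∩ F_n i.o.) ≥ c`.
-/

theorem Set.iUnion_add_subset_iUnion_add {α : Type*} (s : ℕ → Set α) {m n : ℕ} (h : m ≤ n) :
    ⋃ i, s (i + n) ⊆ ⋃ i, s (i + m) :=
  Set.iUnion_subset fun i => Set.subset_iUnion_of_subset (i + (n - m)) <| by
    rw [show i + (n - m) + m = i + n by omega]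

theorem measure_limsup_atTop_eq_iInf {Ω : Type*} [MeasurableSpace Ω] {μ : Measure Ω}
    [IsFiniteMeasure μ] {s : ℕ → Set Ω} (hs : ∀ n, MeasurableSet (s n)) :
    μ (limsup s atTop) = ⨅ n, μ (⋃ i, s (i + n)) := by
  rw [limsup_eq_iInf_iSup_of_nat']
  exact Antitone.measure_iInter (fun _ _ => Set.iUnion_add_subset_iUnion_add s)
    (fun n => (MeasurableSet.iUnion fun i => hs _).nullMeasurableSet) ⟨0, measure_ne_top μ _⟩

theorem ProbabilityTheory.Indep.mul_measure_iUnion_le_measure_iUnion_inter {Ω : Type*}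
    {m₁ m₂ mΩ : MeasurableSpace Ω} {μ : Measure Ω} (hindep : Indep m₁ m₂ μ)
    (h₁ : m₁ ≤ mΩ) (h₂ : m₂ ≤ mΩ) {A B : ℕ → Set Ω}
    (hA : ∀ n, MeasurableSet[m₁] (A n)) (hB : ∀ n, MeasurableSet[m₂] (B n))
    {c : ℝ≥0∞} (hc : ∀ n, c ≤ μ (B n)) :
    μ (⋃ n, A n) * c ≤ μ (⋃ n, A n ∩ B n) := by
  have hD : ∀ n, MeasurableSet[m₁] (disjointed A n) := @MeasurableSet.disjointed _ m₁ _ hA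
  have hDB : Pairwise (Function.onFun Disjoint fun n => disjointed A n ∩ B n) := fun i j hij =>
    (disjoint_disjointed A hij).mono Set.inter_subset_left Set.inter_subset_left
  calc μ (⋃ n, A n) * c = ∑' n, μ (disjointed A n) * c := by
        rw [← iUnion_disjointed, measure_iUnion (disjoint_disjointed A) fun n => h₁ _ (hD n),
          ENNReal.tsum_mul_right]
    _ ≤ ∑' n, μ (disjointed A n) * μ (B n) :=
        ENNReal.tsum_le_tsum fun n => mul_le_mul_right (hc n) _
    _ = ∑' n, μ (disjointed A n ∩ B n) :=
        tsum_congr fun n => ((Indep_iff _ _ μ).1 hindep _ _ (hD n) (hB n)).symm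
    _ = μ (⋃ n, disjointed A n ∩ B n) :=
        (measure_iUnion hDB fun n => (h₁ _ (hD n)).inter (h₂ _ (hB n))).symm
    _ ≤ μ (⋃ n, A n ∩ B n) :=
        measure_mono <| Set.iUnion_mono fun n => Set.inter_subset_inter_left _ (disjointed_le A n)

/-- Klass's lemma: If `P(E_n i.o.) = 1`, the σ-algebra generated
by the `F_n` is independent of the σ-algebra generated by the `E_n`, and
`P(F_n) ≥ c > 0` for `n > n₀`, then `P(E_n ∩ F_n i.o.) > 0`. -/
theorem stmt7 {Ω : Type*} [mΩ : MeasurableSpace Ω] (P : Measure Ω)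
    [IsProbabilityMeasure P]
    (E F : ℕ → Set Ω)
    (hEmeas : ∀ n, MeasurableSet (E n)) (hFmeas : ∀ n, MeasurableSet (F n))
    (hE : P (Filter.limsup E atTop) = 1)
    (hindep : Indep
      (MeasurableSpace.generateFrom {s : Set Ω | ∃ n, s = E n})
      (MeasurableSpace.generateFrom {s : Set Ω | ∃ n, s = F n}) P)
    (c : ℝ≥0∞) (hc : 0 < c) (n₀ : ℕ)
    (hF : ∀ n, n₀ < n → c ≤ P (F n)) :
    0 < P (Filter.limsup (fun n => E n ∩ F n) atTop) := by
  have hσE := MeasurableSpace.generateFrom_le (m := mΩ) (s := {s | ∃ n, s = E n})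
    (by rintro _ ⟨n, rfl⟩; exact hEmeas n)
  have hσF := MeasurableSpace.generateFrom_le (m := mΩ) (s := {s | ∃ n, s = F n})
    (by rintro _ ⟨n, rfl⟩; exact hFmeas n)
  rw [measure_limsup_atTop_eq_iInf fun n => (hEmeas n).inter (hFmeas n)]
  refine hc.trans_le (le_iInf fun m => ?_)
  have htail : P (⋃ i, E (i + (m + n₀ + 1))) = 1 := by
    refine le_antisymm prob_le_one (hE ▸ measure_mono ?_)
    rw [limsup_eq_iInf_iSup_of_nat']
    exact iInf_le (fun n => ⋃ i, E (i + n)) _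
  calc c = P (⋃ i, E (i + (m + n₀ + 1))) * c := by rw [htail, one_mul]
    _ ≤ P (⋃ i, E (i + (m + n₀ + 1)) ∩ F (i + (m + n₀ + 1))) :=
        hindep.mul_measure_iUnion_le_measure_iUnion_inter hσE hσF
          (fun _ => MeasurableSpace.measurableSet_generateFrom ⟨_, rfl⟩)
          (fun _ => MeasurableSpace.measurableSet_generateFrom ⟨_, rfl⟩)
          (fun _ => hF _ (by omega))
    _ ≤ P (⋃ i, E (i + m) ∩ F (i + m)) :=
        measure_mono (Set.iUnion_add_subset_iUnion_add (fun n => E n ∩ F n) (by omega))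
end

section
/- Let $S(n)$ be a simple symmetric random walk on $\mathbb{Z}$ with local time at zero $\xi(0,n) = \#\{k : 0 < k \leq n, S(k) = 0\}$. Then for every $\varepsilon > 0$, almost surely for all sufficiently large $n$, $\xi(0,n) \geq \frac{\sqrt{n}}{(\log n)^{1+\varepsilon}}$. -/
open MeasureTheory ProbabilityTheory Finset Filter ENNReal Classical



noncomputable section SRWCount

/-- step value of a Bool letter -/
def stp (b : Bool) : ℤ := if b then 1 else -1

lemma stp_cases (b : Bool) : stp b = 1 ∨ stp b = -1 := by
  cases b <;> simp [stp]

lemma stp_eq_one_iff {b : Bool} : stp b = 1 ↔ b = true := by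
  cases b <;> simp [stp]

lemma stp_eq_negone_iff {b : Bool} : stp b = -1 ↔ b = false := by
  cases b <;> simp [stp]

/-- partial sums of a word -/
def wsum (x : ℕ → Bool) (n : ℕ) : ℤ := ∑ i ∈ range n, stp (x i)

lemma wsum_succ (x : ℕ → Bool) (n : ℕ) : wsum x (n + 1) = wsum x n + stp (x n) := by
  simp [wsum, Finset.sum_range_succ]

lemma wsum_congr {x y : ℕ → Bool} {n : ℕ} (h : ∀ i < n, x i = y i) :
    wsum x n = wsum y n := by
  unfold wsum
  exact Finset.sum_congr rfl (fun i hi => by rw [h i (Finset.mem_range.1 hi)])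

/-- discrete IVT : if the walk ends at or below `v ≤ 0`, it visits `v`. -/
lemma exists_hit (x : ℕ → Bool) (v : ℤ) (hv : v ≤ 0) :
    ∀ N, wsum x N ≤ v → ∃ j ≤ N, wsum x j = v := by
  intro N
  induction N with
  | zero =>
    intro h
    refine ⟨0, le_refl 0, ?_⟩
    simp [wsum] at h ⊢
    omega
  | succ n ih =>
    intro h
    by_cases he : wsum x (n+1) = v
    · exact ⟨n+1, le_refl _, he⟩
    · have h2 : wsum x n ≤ v := by
        rcases stp_cases (x n) with h1 | h1 <;> rw [wsum_succ, h1] at h he <;> omega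
      obtain ⟨j, hj, hjv⟩ := ih h2
      exact ⟨j, Nat.le_succ_of_le hj, hjv⟩

/-- Tanaka transform of a word. -/
def tnk (x : ℕ → Bool) : ℕ → Bool := fun i => xor (decide (wsum x i < 0)) (x i)

lemma stp_tnk (x : ℕ → Bool) (i : ℕ) :
    stp (tnk x i) = if wsum x i < 0 then - stp (x i) else stp (x i) := by
  unfold tnk
  by_cases h : wsum x i < 0 <;> cases hb : x i <;> simp [h, hb, stp]

/-- number of down-crossings of 0 before time n -/
def dcr (x : ℕ → Bool) (n : ℕ) : ℕ :=
  ((range n).filter (fun i => wsum x i = 0 ∧ x i = false)).card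

lemma dcr_succ (x : ℕ → Bool) (n : ℕ) :
    dcr x (n+1) = dcr x n + (if wsum x n = 0 ∧ x n = false then 1 else 0) := by
  unfold dcr
  rw [Finset.range_add_one, Finset.filter_insert]
  by_cases h : wsum x n = 0 ∧ x n = false
  · rw [if_pos h, Finset.card_insert_of_notMem (by simp), if_pos h]
  · rw [if_neg h, if_neg h]; omega

lemma dcr_mono (x : ℕ → Bool) {m n : ℕ} (h : m ≤ n) : dcr x m ≤ dcr x n :=
  Finset.card_le_card (Finset.filter_subset_filter _ (Finset.range_subset_range.2 h))

/-- Discrete Tanaka formula. -/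
lemma tanaka (x : ℕ → Bool) (n : ℕ) :
    |wsum x n| = wsum (tnk x) n + 2 * (dcr x n : ℤ) := by
  induction n with
  | zero => simp [wsum, dcr]; rfl
  | succ n ih =>
    rw [wsum_succ, wsum_succ, stp_tnk, dcr_succ]
    rcases lt_trichotomy (wsum x n) 0 with hs | hs | hs
    · have h1 : |wsum x n| = -(wsum x n) := abs_of_neg hs
      have hxx : ¬ (wsum x n = 0 ∧ x n = false) := by intro hc; omega
      rw [if_pos hs, if_neg hxx]
      have h2 : |wsum x n + stp (x n)| = -(wsum x n + stp (x n)) := by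
        apply abs_of_nonpos
        rcases stp_cases (x n) with h | h <;> omega
      push_cast
      omega
    · -- at zero
      have h1 : |wsum x n| = wsum x n := abs_of_nonneg (le_of_eq hs.symm)
      rw [if_neg (by omega)]
      have h2 : |wsum x n + stp (x n)| = 1 := by
        rcases stp_cases (x n) with h | h <;> rw [h] <;> simp [hs]
      rcases stp_cases (x n) with h | h
      · have hxn : x n = true := stp_eq_one_iff.1 h
        rw [if_neg (by simp [hxn])]
        push_cast
        omega
      · have hxn : x n = false := stp_eq_negone_iff.1 h
        rw [if_pos ⟨hs, hxn⟩]
        push_cast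
        omega
    · have h1 : |wsum x n| = wsum x n := abs_of_nonneg (le_of_lt hs)
      have hxx : ¬ (wsum x n = 0 ∧ x n = false) := by intro hc; omega
      rw [if_neg (by omega), if_neg hxx]
      have h2 : |wsum x n + stp (x n)| = wsum x n + stp (x n) := by
        apply abs_of_nonneg
        rcases stp_cases (x n) with h | h <;> omega
      push_cast
      omega

/-- lower bound for the transformed walk -/
lemma tnk_ge (x : ℕ → Bool) (j : ℕ) :
    wsum (tnk x) j ≥ -2 * (dcr x j : ℤ) := by
  have := tanaka x j
  have h0 : (0:ℤ) ≤ |wsum x j| := abs_nonneg _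
  omega

end SRWCount

section Words

open Finset

variable {N : ℕ}

/-- extension of a finite word -/
def ext (s : Fin N → Bool) : ℕ → Bool := fun i => if h : i < N then s ⟨i, h⟩ else true

lemma ext_lt (s : Fin N → Bool) {i : ℕ} (h : i < N) : ext s i = s ⟨i, h⟩ := dif_pos h

/-- number of zeros (local time at 0) of a word -/
def ξw (s : Fin N → Bool) : ℕ := ((Icc 1 N).filter (fun k => wsum (ext s) k = 0)).card

/-- Tanaka transform as a self-map of words -/
def φw (s : Fin N → Bool) : Fin N → Bool := fun i => tnk (ext s) i.val

lemma wsum_ext_φw (s : Fin N → Bool) {j : ℕ} (hj : j ≤ N) :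
    wsum (ext (φw s)) j = wsum (tnk (ext s)) j := by
  apply wsum_congr
  intro i hi
  rw [ext_lt _ (lt_of_lt_of_le hi hj)]
  rfl

lemma φw_injective : Function.Injective (φw (N := N)) := by
  intro s s' h
  have key : ∀ i, ∀ hi : i < N, s ⟨i, hi⟩ = s' ⟨i, hi⟩ := by
    intro i
    induction i using Nat.strong_induction_on with
    | _ i ih =>
      intro hi
      have hsum : wsum (ext s) i = wsum (ext s') i := by
        apply wsum_congr
        intro j hj
        have hjN : j < N := lt_trans hj hi
        rw [ext_lt _ hjN, ext_lt _ hjN]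
        exact ih j hj hjN
      have h2 := congrFun h ⟨i, hi⟩
      unfold φw tnk at h2
      simp only [ext_lt _ hi] at h2
      rw [hsum] at h2
      cases hd : decide (wsum (ext s') i < 0) <;> rw [hd] at h2 <;> simpa using h2
  funext i
  exact key i.val i.isLt

/-- count of trues -/
def Tc (s : Fin N → Bool) : ℕ := (univ.filter (fun i => s i = true)).card

lemma wsum_ext_N (s : Fin N → Bool) : wsum (ext s) N = 2 * (Tc s : ℤ) - N := by
  have h1 : wsum (ext s) N = ∑ i : Fin N, stp (s i) := by
    unfold wsum
    rw [← Fin.sum_univ_eq_sum_range (fun i => stp (ext s i)) N]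
    exact Finset.sum_congr rfl (fun i _ => by rw [ext_lt _ i.isLt])
  have h2 : ∀ i : Fin N, stp (s i) = 2 * (if s i = true then (1:ℤ) else 0) - 1 := by
    intro i; cases hb : s i <;> simp [stp, hb]
  rw [h1, Finset.sum_congr rfl (fun i _ => h2 i), Finset.sum_sub_distrib,
    ← Finset.mul_sum, Finset.sum_boole]
  simp [Tc]

lemma card_Tc_eq (u : ℕ) :
    (univ.filter (fun s : Fin N → Bool => Tc s = u)).card = N.choose u := by
  have hcard : ((univ : Finset (Fin N)).card).choose u = N.choose u := by simp
  rw [← hcard, ← Finset.card_powersetCard u (univ : Finset (Fin N))]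
  refine Finset.card_bij' (fun s _ => univ.filter (fun i => s i = true))
    (fun A _ => (fun i => decide (i ∈ A))) ?_ ?_ ?_ ?_
  · intro s hs
    simp only [Finset.mem_filter, Finset.mem_univ, true_and] at hs
    simp only [Finset.mem_powersetCard]
    exact ⟨Finset.subset_univ _, hs⟩
  · intro A hA
    simp only [Finset.mem_powersetCard] at hA
    simp only [Finset.mem_filter, Finset.mem_univ, true_and]
    rw [← hA.2]
    unfold Tc
    congr 1
    ext i
    simp
  · intro s hs
    funext i
    simp only [Finset.mem_filter, Finset.mem_univ, true_and]
    cases hb : s i <;> simp [hb]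
  · intro A hA
    ext i
    simp

/-- endpoint fiber count -/
lemma card_endEq (v : ℤ) :
    (univ.filter (fun s : Fin N → Bool => wsum (ext s) N = v)).card ≤ N.choose (N / 2) := by
  classical
  by_cases hpar : ∃ u : ℕ, (v : ℤ) = 2 * u - N
  · obtain ⟨u, hu⟩ := hpar
    calc (univ.filter (fun s : Fin N → Bool => wsum (ext s) N = v)).card
        ≤ (univ.filter (fun s : Fin N → Bool => Tc s = u)).card := by
          apply Finset.card_le_card
          intro s hs
          simp only [Finset.mem_filter, Finset.mem_univ, true_and] at hs ⊢
          have := wsum_ext_N s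
          omega
      _ = N.choose u := card_Tc_eq u
      _ ≤ N.choose (N / 2) := Nat.choose_le_middle u N
  · have : (univ.filter (fun s : Fin N → Bool => wsum (ext s) N = v)) = ∅ := by
      apply Finset.filter_eq_empty_iff.2
      intro s _
      intro hc
      exact hpar ⟨Tc s, by rw [← hc, wsum_ext_N]⟩
    simp [this]

end Words

section Reflection

open Finset

variable {N : ℕ}

/-- the word hits level `-m` by time `N` -/
def hitP (m : ℤ) (s : Fin N → Bool) : Prop := ∃ j, j ≤ N ∧ wsum (ext s) j = -m

/-- reflection of the word after the first hitting time of `-m` -/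
noncomputable def reflw (m : ℤ) (s : Fin N → Bool) : Fin N → Bool :=
  if h : hitP m s then (fun i => if Nat.find h ≤ i.val then !(s i) else s i) else s

lemma reflw_eq (m : ℤ) (s : Fin N → Bool) (h : hitP m s) :
    reflw m s = fun i => if Nat.find h ≤ i.val then !(s i) else s i := by
  rw [reflw, dif_pos h]

lemma find_le (m : ℤ) (s : Fin N → Bool) (h : hitP m s) : Nat.find h ≤ N :=
  (Nat.find_spec h).1

lemma find_hit (m : ℤ) (s : Fin N → Bool) (h : hitP m s) :
    wsum (ext s) (Nat.find h) = -m := (Nat.find_spec h).2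

lemma find_min' (m : ℤ) (s : Fin N → Bool) (h : hitP m s) {j : ℕ} (hj : j < Nat.find h) :
    wsum (ext s) j ≠ -m := by
  intro hc
  exact Nat.find_min h hj ⟨le_trans (le_of_lt hj) (find_le m s h), hc⟩

lemma reflw_wsum_le (m : ℤ) (s : Fin N → Bool) (h : hitP m s) {j : ℕ}
    (hj : j ≤ Nat.find h) (hjN : j ≤ N) :
    wsum (ext (reflw m s)) j = wsum (ext s) j := by
  apply wsum_congr
  intro i hi
  have hiN : i < N := lt_of_lt_of_le hi hjN
  rw [ext_lt _ hiN, ext_lt _ hiN, reflw_eq m s h]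
  simp only
  rw [if_neg (by omega)]

lemma reflw_wsum_ge (m : ℤ) (s : Fin N → Bool) (h : hitP m s) {j : ℕ}
    (hj : Nat.find h ≤ j) (hjN : j ≤ N) :
    wsum (ext (reflw m s)) j = -2 * m - wsum (ext s) j := by
  induction j, hj using Nat.le_induction with
  | base =>
    rw [reflw_wsum_le m s h (le_refl _) hjN, find_hit m s h]
    ring
  | succ j hj ih =>
    have hjN' : j < N := lt_of_lt_of_le (Nat.lt_succ_of_le (le_refl j)) hjN
    rw [wsum_succ, wsum_succ, ih (le_of_lt hjN')]
    have : ext (reflw m s) j = !(ext s j) := by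
      rw [ext_lt _ hjN', ext_lt _ hjN', reflw_eq m s h]
      simp only
      rw [if_pos (by omega)]
    rw [this]
    cases hb : ext s j <;> simp [stp] <;> ring

lemma reflw_hit (m : ℤ) (s : Fin N → Bool) (h : hitP m s) : hitP m (reflw m s) :=
  ⟨Nat.find h, find_le m s h, by
    rw [reflw_wsum_le m s h (le_refl _) (find_le m s h)]; exact find_hit m s h⟩

lemma reflw_find (m : ℤ) (s : Fin N → Bool) (h : hitP m s) :
    Nat.find (reflw_hit m s h) = Nat.find h := by
  apply le_antisymm
  · apply Nat.find_le
    exact ⟨find_le m s h, by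
      rw [reflw_wsum_le m s h (le_refl _) (find_le m s h)]; exact find_hit m s h⟩
  · by_contra hc
    push_neg at hc
    have h1 := find_hit m (reflw m s) (reflw_hit m s h)
    have h2 : Nat.find (reflw_hit m s h) ≤ N := find_le m (reflw m s) (reflw_hit m s h)
    rw [reflw_wsum_le m s h (le_of_lt hc) h2] at h1
    exact find_min' m s h hc h1

lemma reflw_reflw (m : ℤ) (s : Fin N → Bool) (h : hitP m s) :
    reflw m (reflw m s) = s := by
  funext i
  have h0 : reflw m (reflw m s) i
      = if Nat.find (reflw_hit m s h) ≤ i.val then !(reflw m s i) else reflw m s i := by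
    rw [reflw_eq m _ (reflw_hit m s h)]
  rw [h0, reflw_find m s h]
  have h1 : reflw m s i = if Nat.find h ≤ i.val then !(s i) else s i := by
    rw [reflw_eq m s h]
  rw [h1]
  by_cases hi : Nat.find h ≤ i.val
  · rw [if_pos hi, if_pos hi]
    exact Bool.not_not _
  · rw [if_neg hi, if_neg hi]

/-- global flip -/
def flipw (s : Fin N → Bool) : Fin N → Bool := fun i => !(s i)

lemma wsum_not (x : ℕ → Bool) (n : ℕ) : wsum (fun i => !(x i)) n = -wsum x n := by
  induction n with
  | zero => simp [wsum]
  | succ n ih =>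
    rw [wsum_succ, wsum_succ, ih]
    cases hb : x n <;> simp [stp] <;> ring

lemma flipw_wsum (s : Fin N → Bool) {j : ℕ} (hj : j ≤ N) :
    wsum (ext (flipw s)) j = -wsum (ext s) j := by
  rw [← wsum_not (ext s) j]
  apply wsum_congr
  intro i hi
  have hiN : i < N := lt_of_lt_of_le hi hj
  rw [ext_lt _ hiN, ext_lt _ hiN]
  rfl

/-- no-hit paths are counted by paths ending in the window `(-m, m]`. -/
lemma card_noHit (m : ℤ) (hm : 0 < m) :
    (univ.filter (fun s : Fin N → Bool => ¬ hitP m s)).card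
      ≤ (univ.filter (fun s : Fin N → Bool =>
          -m < wsum (ext s) N ∧ wsum (ext s) N ≤ m)).card := by
  set C := univ.filter (fun s : Fin N → Bool => ¬ hitP m s) with hC
  set Egt := univ.filter (fun s : Fin N → Bool => hitP m s ∧ -m < wsum (ext s) N) with hE
  set Flt := univ.filter (fun s : Fin N → Bool => wsum (ext s) N < -m) with hFlt
  set Fgt := univ.filter (fun s : Fin N → Bool => m < wsum (ext s) N) with hFgt
  set FIoc := univ.filter (fun s : Fin N → Bool =>
    -m < wsum (ext s) N ∧ wsum (ext s) N ≤ m) with hFIoc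
  -- C has endpoints > -m
  have hCend : ∀ s ∈ C, -m < wsum (ext s) N := by
    intro s hs
    simp only [hC, Finset.mem_filter, Finset.mem_univ, true_and] at hs
    by_contra hc
    push_neg at hc
    obtain ⟨j, hj, hjv⟩ := exists_hit (ext s) (-m) (by omega) N hc
    exact hs ⟨j, hj, hjv⟩
  -- (a)
  have ha : C.card + Egt.card ≤ Fgt.card + FIoc.card := by
    have hsub : C ∪ Egt ⊆ Fgt ∪ FIoc := by
      intro s hs
      rcases Finset.mem_union.1 hs with hs | hs
      · have := hCend s hs
        by_cases hle : wsum (ext s) N ≤ m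
        · exact Finset.mem_union_right _ (by simp [hFIoc, this, hle])
        · exact Finset.mem_union_left _ (by simp [hFgt]; omega)
      · simp only [hE, Finset.mem_filter, Finset.mem_univ, true_and] at hs
        by_cases hle : wsum (ext s) N ≤ m
        · exact Finset.mem_union_right _ (by simp [hFIoc, hs.2, hle])
        · exact Finset.mem_union_left _ (by simp [hFgt]; omega)
    have hdisj : Disjoint C Egt := by
      rw [Finset.disjoint_left]
      intro s hs hs'
      simp only [hC, Finset.mem_filter, Finset.mem_univ, true_and] at hs
      simp only [hE, Finset.mem_filter, Finset.mem_univ, true_and] at hs'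
      exact hs hs'.1
    have hdisj2 : Disjoint Fgt FIoc := by
      rw [Finset.disjoint_left]
      intro s hs hs'
      simp only [hFgt, Finset.mem_filter, Finset.mem_univ, true_and] at hs
      simp only [hFIoc, Finset.mem_filter, Finset.mem_univ, true_and] at hs'
      omega
    calc C.card + Egt.card = (C ∪ Egt).card := (Finset.card_union_of_disjoint hdisj).symm
      _ ≤ (Fgt ∪ FIoc).card := Finset.card_le_card hsub
      _ = Fgt.card + FIoc.card := Finset.card_union_of_disjoint hdisj2
  -- (b) Egt.card = Flt.card via reflection
  have hb : Egt.card = Flt.card := by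
    apply Finset.card_bij' (fun s _ => reflw m s) (fun s _ => reflw m s)
    · intro s hs
      simp only [hE, Finset.mem_filter, Finset.mem_univ, true_and] at hs
      simp only [hFlt, Finset.mem_filter, Finset.mem_univ, true_and]
      rw [reflw_wsum_ge m s hs.1 (find_le m s hs.1) (le_refl N)]
      omega
    · intro s hs
      simp only [hFlt, Finset.mem_filter, Finset.mem_univ, true_and] at hs
      have hh : hitP m s := by
        obtain ⟨j, hj, hjv⟩ := exists_hit (ext s) (-m) (by omega) N (by omega)
        exact ⟨j, hj, hjv⟩
      simp only [hE, Finset.mem_filter, Finset.mem_univ, true_and]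
      refine ⟨reflw_hit m s hh, ?_⟩
      rw [reflw_wsum_ge m s hh (find_le m s hh) (le_refl N)]
      omega
    · intro s hs
      simp only [hE, Finset.mem_filter, Finset.mem_univ, true_and] at hs
      exact reflw_reflw m s hs.1
    · intro s hs
      simp only [hFlt, Finset.mem_filter, Finset.mem_univ, true_and] at hs
      have hh : hitP m s := by
        obtain ⟨j, hj, hjv⟩ := exists_hit (ext s) (-m) (by omega) N (by omega)
        exact ⟨j, hj, hjv⟩
      exact reflw_reflw m s hh
  -- (c) Flt.card = Fgt.card via global flip
  have hc : Flt.card = Fgt.card := by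
    apply Finset.card_bij' (fun s _ => flipw s) (fun s _ => flipw s)
    · intro s hs
      simp only [hFlt, Finset.mem_filter, Finset.mem_univ, true_and] at hs
      simp only [hFgt, Finset.mem_filter, Finset.mem_univ, true_and]
      rw [flipw_wsum s (le_refl N)]
      omega
    · intro s hs
      simp only [hFgt, Finset.mem_filter, Finset.mem_univ, true_and] at hs
      simp only [hFlt, Finset.mem_filter, Finset.mem_univ, true_and]
      rw [flipw_wsum s (le_refl N)]
      omega
    · intro s _
      funext i
      simp [flipw]
    · intro s _
      funext i
      simp [flipw]
  omega

end Reflection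

section MainCount

open Finset

lemma dcr_le_xi {N : ℕ} (s : Fin N → Bool) : dcr (ext s) N ≤ 1 + ξw s := by
  unfold dcr ξw
  calc ((range N).filter (fun i => wsum (ext s) i = 0 ∧ ext s i = false)).card
      ≤ (insert 0 ((Icc 1 N).filter (fun k => wsum (ext s) k = 0))).card := by
        apply Finset.card_le_card
        intro i hi
        simp only [Finset.mem_filter, Finset.mem_range] at hi
        rcases Nat.eq_zero_or_pos i with h0 | h0
        · simp [h0]
        · apply Finset.mem_insert_of_mem
          simp only [Finset.mem_filter, Finset.mem_Icc]
          exact ⟨⟨h0, le_of_lt hi.1⟩, hi.2.1⟩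
    _ ≤ 1 + ((Icc 1 N).filter (fun k => wsum (ext s) k = 0)).card := by
        rw [add_comm]
        exact Finset.card_insert_le _ _

lemma no_hit_of_xi_lt {N : ℕ} (K : ℕ) (s : Fin N → Bool) (h : ξw s < K) :
    ¬ hitP (2 * K + 1 : ℤ) (φw s) := by
  rintro ⟨j, hjN, hv⟩
  rw [wsum_ext_φw s hjN] at hv
  have h1 := tnk_ge (ext s) j
  have h2 : dcr (ext s) j ≤ dcr (ext s) N := dcr_mono _ hjN
  have h3 := dcr_le_xi s
  have h4 : (dcr (ext s) j : ℤ) ≤ K := by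
    have : dcr (ext s) j ≤ 1 + ξw s := le_trans h2 h3
    push_cast
    omega
  omega

lemma card_xi_lt (N K : ℕ) :
    ((univ.filter (fun s : Fin N → Bool => ξw s < K)).card : ℕ)
      ≤ (4 * K + 2) * N.choose (N / 2) := by
  have hm : (0:ℤ) < 2 * K + 1 := by positivity
  calc (univ.filter (fun s : Fin N → Bool => ξw s < K)).card
      ≤ (univ.filter (fun s : Fin N → Bool => ¬ hitP (2 * K + 1 : ℤ) s)).card := by
        apply Finset.card_le_card_of_injOn (fun s => φw s)
        · intro s hs
          simp only [Finset.mem_filter, Finset.mem_univ, true_and] at hs ⊢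
          simpa using no_hit_of_xi_lt K s (by simpa using hs)
        · intro s _ s' _ hss
          exact φw_injective hss
    _ ≤ (univ.filter (fun s : Fin N → Bool =>
          -(2 * K + 1 : ℤ) < wsum (ext s) N ∧ wsum (ext s) N ≤ (2 * K + 1 : ℤ))).card :=
        card_noHit _ hm
    _ ≤ (4 * K + 2) * N.choose (N / 2) := by
        rw [Finset.card_eq_sum_card_fiberwise
          (f := fun s => wsum (ext s) N) (t := Finset.Ioc (-(2 * K + 1) : ℤ) (2 * K + 1))
          (by intro s hs
              simp only [Finset.mem_coe, Finset.mem_filter, Finset.mem_univ, true_and] at hs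
              simp only [Finset.mem_coe, Finset.mem_Ioc]
              exact hs)]
        calc ∑ v ∈ Finset.Ioc (-(2 * K + 1) : ℤ) (2 * K + 1),
              ((univ.filter (fun s : Fin N → Bool =>
                -(2 * K + 1 : ℤ) < wsum (ext s) N ∧ wsum (ext s) N ≤ (2 * K + 1 : ℤ))).filter
                (fun s => wsum (ext s) N = v)).card
            ≤ ∑ v ∈ Finset.Ioc (-(2 * K + 1) : ℤ) (2 * K + 1), N.choose (N / 2) := by
              apply Finset.sum_le_sum
              intro v _
              calc _ ≤ (univ.filter (fun s : Fin N → Bool => wsum (ext s) N = v)).card := by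
                    apply Finset.card_le_card
                    intro s hs
                    simp only [Finset.mem_filter, Finset.mem_univ, true_and] at hs ⊢
                    exact hs.2
                _ ≤ N.choose (N / 2) := card_endEq v
          _ = (4 * K + 2) * N.choose (N / 2) := by
              rw [Finset.sum_const, smul_eq_mul]
              congr 1
              rw [Int.card_Ioc]
              omega
    
/-- central binomial analytic bound -/
lemma choose_central_real_bound : ∀ t : ℕ, ((2 * t).choose t : ℝ) ≤ 4 ^ t / Real.sqrt (t + 1) := by
  intro t
  induction t with
  | zero => simp
  | succ t ih =>
    have hrec := Nat.succ_mul_centralBinom_succ t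
    have hcb : Nat.centralBinom t = (2 * t).choose t := rfl
    have hcb' : Nat.centralBinom (t + 1) = (2 * (t + 1)).choose (t + 1) := rfl
    have hrecR : ((t:ℝ) + 1) * ((2 * (t + 1)).choose (t + 1) : ℝ)
        = 2 * (2 * t + 1) * ((2 * t).choose t : ℝ) := by
      rw [← hcb, ← hcb']
      exact_mod_cast congrArg (Nat.cast : ℕ → ℝ) hrec
    have hs1 : (0:ℝ) < Real.sqrt (t + 1) := Real.sqrt_pos.2 (by positivity)
    have hs2 : (0:ℝ) < Real.sqrt (t + 2) := Real.sqrt_pos.2 (by positivity)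
    -- key : (2t+1) * sqrt (t+2) ≤ 2*(t+1)*sqrt (t+1)
    have hkey : (2 * (t:ℝ) + 1) * Real.sqrt (t + 2) ≤ 2 * ((t:ℝ) + 1) * Real.sqrt (t + 1) := by
      have h1 : (0:ℝ) ≤ 2 * (t:ℝ) + 1 := by positivity
      have h2 : (0:ℝ) ≤ 2 * ((t:ℝ) + 1) := by positivity
      apply le_of_pow_le_pow_left₀ (n := 2) (by norm_num) (by positivity)
      rw [mul_pow, mul_pow, Real.sq_sqrt (by positivity), Real.sq_sqrt (by positivity)]
      nlinarith [sq_nonneg ((t:ℝ))]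
    have hchooseNN : (0:ℝ) ≤ ((2 * t).choose t : ℝ) := by positivity
    -- conclude
    have ht1 : (0:ℝ) < (t:ℝ) + 1 := by positivity
    rw [show ((t + 1 : ℕ) : ℝ) + 1 = (t:ℝ) + 2 by push_cast; ring, le_div_iff₀ hs2]
    -- goal : choose (2(t+1)) (t+1) * sqrt (t+2) ≤ 4^(t+1)
    have expand : ((2 * (t + 1)).choose (t + 1) : ℝ)
        = 2 * (2 * t + 1) * ((2 * t).choose t : ℝ) / ((t:ℝ) + 1) := by
      field_simp at hrecR ⊢
      linarith [hrecR]
    rw [expand]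
    have hih : ((2 * t).choose t : ℝ) * Real.sqrt (t + 1) ≤ 4 ^ t := by
      rwa [le_div_iff₀ hs1] at ih
    calc 2 * (2 * (t:ℝ) + 1) * ((2 * t).choose t : ℝ) / ((t:ℝ) + 1) * Real.sqrt (t + 2)
        = ((2 * t).choose t : ℝ) * ((2 * (t:ℝ) + 1) * Real.sqrt (t + 2)) * (2 / ((t:ℝ) + 1)) := by
          ring
      _ ≤ ((2 * t).choose t : ℝ) * (2 * ((t:ℝ) + 1) * Real.sqrt (t + 1)) * (2 / ((t:ℝ) + 1)) := by
          apply mul_le_mul_of_nonneg_right _ (by positivity)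
          exact mul_le_mul_of_nonneg_left hkey hchooseNN
      _ = (((2 * t).choose t : ℝ) * Real.sqrt (t + 1)) * 4 := by
          field_simp
          ring
      _ ≤ 4 ^ t * 4 := by
          apply mul_le_mul_of_nonneg_right hih (by norm_num)
      _ = 4 ^ (t + 1) := by ring

end MainCount

section Transfer

open MeasureTheory ProbabilityTheory Finset ENNReal

variable {Ω : Type*} [MeasurableSpace Ω] {P : Measure Ω} [IsProbabilityMeasure P]
  {X : ℕ → Ω → ℤ}

lemma bad_null (hmeas : ∀ i, Measurable (X i))
    (hdist : ∀ i, P {ω | X i ω = 1} = 1/2 ∧ P {ω | X i ω = -1} = 1/2) (i : ℕ) :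
    P {ω | X i ω ≠ 1 ∧ X i ω ≠ -1} = 0 := by
  have hA : MeasurableSet {ω | X i ω = 1} := by
    have := hmeas i (measurableSet_singleton (1 : ℤ))
    convert this using 1
    rfl
  have hB : MeasurableSet {ω | X i ω = -1} := by
    have := hmeas i (measurableSet_singleton (-1 : ℤ))
    convert this using 1
    rfl
  have hdisj : Disjoint {ω | X i ω = 1} {ω | X i ω = -1} := by
    rw [Set.disjoint_left]
    intro ω h1 h2
    simp only [Set.mem_setOf_eq] at h1 h2
    omega
  have hU : P ({ω | X i ω = 1} ∪ {ω | X i ω = -1}) = 1 := by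
    rw [measure_union hdisj hB, (hdist i).1, (hdist i).2]
    rw [one_div]
    exact ENNReal.inv_two_add_inv_two
  have : {ω | X i ω ≠ 1 ∧ X i ω ≠ -1} = ({ω | X i ω = 1} ∪ {ω | X i ω = -1})ᶜ := by
    ext ω
    simp [not_or]
  rw [this]
  rwa [prob_compl_eq_zero_iff (hA.union hB)]

lemma cylinder_prob (hindep : iIndepFun X P)
    (hdist : ∀ i, P {ω | X i ω = 1} = 1/2 ∧ P {ω | X i ω = -1} = 1/2)
    {N : ℕ} (s : Fin N → Bool) :
    P (⋂ i ∈ Finset.range N, X i ⁻¹' {stp (ext s i)}) = 2⁻¹ ^ N := by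
  rw [hindep.meas_biInter (S := Finset.range N)
    (s := fun i => X i ⁻¹' {stp (ext s i)})
    (fun i _ => ⟨{stp (ext s i)}, measurableSet_singleton _, rfl⟩)]
  have hval : ∀ i, P (X i ⁻¹' {stp (ext s i)}) = 2⁻¹ := by
    intro i
    rcases stp_cases (ext s i) with h | h
    · rw [h]
      have h2 : X i ⁻¹' {1} = {ω | X i ω = 1} := by ext ω; simp
      rw [h2, (hdist i).1, one_div]
    · rw [h]
      have h2 : X i ⁻¹' {-1} = {ω | X i ω = -1} := by ext ω; simp
      rw [h2, (hdist i).2, one_div]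
  rw [Finset.prod_congr rfl (fun i _ => hval i), Finset.prod_const, Finset.card_range]

lemma prob_xi_lt (hmeas : ∀ i, Measurable (X i))
    (hindep : iIndepFun X P)
    (hdist : ∀ i, P {ω | X i ω = 1} = 1/2 ∧ P {ω | X i ω = -1} = 1/2)
    (S : Ω → ℕ → ℤ) (hS : ∀ ω n, S ω n = ∑ i ∈ Finset.range n, X i ω)
    (ξ₀ : Ω → ℕ → ℕ)
    (hξ : ∀ ω n, ξ₀ ω n = ((Finset.Icc 1 n).filter fun k => S ω k = 0).card)
    (N K : ℕ) :
    P {ω | ξ₀ ω N < K}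
      ≤ ((univ.filter (fun s : Fin N → Bool => ξw s < K)).card : ℝ≥0∞) * 2⁻¹ ^ N := by
  classical
  set good := univ.filter (fun s : Fin N → Bool => ξw s < K) with hgood
  have hincl : {ω | ξ₀ ω N < K}
      ⊆ (⋃ s ∈ good, ⋂ i ∈ Finset.range N, X i ⁻¹' {stp (ext s i)})
        ∪ ⋃ i ∈ Finset.range N, {ω | X i ω ≠ 1 ∧ X i ω ≠ -1} := by
    intro ω hω
    simp only [Set.mem_setOf_eq] at hω
    by_cases hbad : ∃ i ∈ Finset.range N, X i ω ≠ 1 ∧ X i ω ≠ -1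
    · apply Set.mem_union_right
      obtain ⟨i, hi, h⟩ := hbad
      exact Set.mem_biUnion hi h
    · push_neg at hbad
      apply Set.mem_union_left
      set s : Fin N → Bool := fun i => decide (X i.val ω = 1) with hs'
      have hstp : ∀ i < N, stp (ext s i) = X i ω := by
        intro i hi
        rw [ext_lt _ hi, hs']
        simp only
        by_cases h1 : X i ω = 1
        · simp [h1, stp]
        · have h2 := hbad i (Finset.mem_range.2 hi) h1
          simp [h1, stp, h2]
      have hwsum : ∀ k ≤ N, S ω k = wsum (ext s) k := by
        intro k hk
        rw [hS, wsum]
        exact Finset.sum_congr rfl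
          (fun i hi => (hstp i (lt_of_lt_of_le (Finset.mem_range.1 hi) hk)).symm)
      have hxi : ξ₀ ω N = ξw s := by
        rw [hξ, ξw]
        congr 1
        apply Finset.filter_congr
        intro k hk
        rw [hwsum k (Finset.mem_Icc.1 hk).2]
      apply Set.mem_biUnion (show s ∈ good by
        simp only [hgood, Finset.mem_filter, Finset.mem_univ, true_and]
        omega)
      simp only [Set.mem_iInter]
      intro i hi
      simp only [Set.mem_preimage, Set.mem_singleton_iff]
      exact (hstp i (Finset.mem_range.1 hi)).symm
  calc P {ω | ξ₀ ω N < K}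
      ≤ P ((⋃ s ∈ good, ⋂ i ∈ Finset.range N, X i ⁻¹' {stp (ext s i)})
        ∪ ⋃ i ∈ Finset.range N, {ω | X i ω ≠ 1 ∧ X i ω ≠ -1}) := measure_mono hincl
    _ ≤ P (⋃ s ∈ good, ⋂ i ∈ Finset.range N, X i ⁻¹' {stp (ext s i)})
        + P (⋃ i ∈ Finset.range N, {ω | X i ω ≠ 1 ∧ X i ω ≠ -1}) := measure_union_le _ _
    _ ≤ (good.card : ℝ≥0∞) * 2⁻¹ ^ N + 0 := by
        gcongr
        · calc P (⋃ s ∈ good, ⋂ i ∈ Finset.range N, X i ⁻¹' {stp (ext s i)})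
              ≤ ∑ s ∈ good, P (⋂ i ∈ Finset.range N, X i ⁻¹' {stp (ext s i)}) :=
                measure_biUnion_finset_le _ _
            _ = ∑ s ∈ good, 2⁻¹ ^ N :=
                Finset.sum_congr rfl (fun s _ => cylinder_prob hindep hdist s)
            _ = (good.card : ℝ≥0∞) * 2⁻¹ ^ N := by
                rw [Finset.sum_const, nsmul_eq_mul]
        · calc P (⋃ i ∈ Finset.range N, {ω | X i ω ≠ 1 ∧ X i ω ≠ -1})
              ≤ ∑ i ∈ Finset.range N, P {ω | X i ω ≠ 1 ∧ X i ω ≠ -1} :=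
                measure_biUnion_finset_le _ _
            _ = 0 := by
                rw [Finset.sum_congr rfl (fun i _ => bad_null hmeas hdist i)]
                simp
    _ = (good.card : ℝ≥0∞) * 2⁻¹ ^ N := by rw [add_zero]

end Transfer

section ProbBound

open MeasureTheory ProbabilityTheory Finset ENNReal

variable {Ω : Type*} [MeasurableSpace Ω] {P : Measure Ω} [IsProbabilityMeasure P]
  {X : ℕ → Ω → ℤ}

lemma prob_bound_even (hmeas : ∀ i, Measurable (X i))
    (hindep : iIndepFun X P)
    (hdist : ∀ i, P {ω | X i ω = 1} = 1/2 ∧ P {ω | X i ω = -1} = 1/2)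
    (S : Ω → ℕ → ℤ) (hS : ∀ ω n, S ω n = ∑ i ∈ Finset.range n, X i ω)
    (ξ₀ : Ω → ℕ → ℕ)
    (hξ : ∀ ω n, ξ₀ ω n = ((Finset.Icc 1 n).filter fun k => S ω k = 0).card)
    (t K : ℕ) :
    P {ω | ξ₀ ω (2 * t) < K}
      ≤ ENNReal.ofReal ((4 * K + 2) / Real.sqrt (t + 1)) := by
  refine le_trans (prob_xi_lt hmeas hindep hdist S hS ξ₀ hξ (2 * t) K) ?_
  set c := (univ.filter (fun s : Fin (2 * t) → Bool => ξw s < K)).card with hc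
  have hcard : c ≤ (4 * K + 2) * (2 * t).choose t := by
    have := card_xi_lt (2 * t) K
    rwa [Nat.mul_div_cancel_left t (by norm_num : 0 < 2)] at this
  have h2inv : (2⁻¹ : ℝ≥0∞) ^ (2 * t) = ENNReal.ofReal ((2⁻¹ : ℝ) ^ (2 * t)) := by
    rw [ENNReal.ofReal_pow (by norm_num)]
    congr 1
    rw [ENNReal.ofReal_inv_of_pos (by norm_num)]
    norm_num
  rw [h2inv, ← ENNReal.ofReal_natCast c, ← ENNReal.ofReal_mul (by positivity)]
  apply ENNReal.ofReal_le_ofReal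
  have hsq : (0:ℝ) < Real.sqrt (t + 1) := Real.sqrt_pos.2 (by positivity)
  have hchoose := choose_central_real_bound t
  have hpow : ((2:ℝ)⁻¹) ^ (2 * t) = ((4:ℝ) ^ t)⁻¹ := by
    rw [pow_mul]
    norm_num
    rw [one_div, inv_pow]
  have h4t : (0:ℝ) < (4:ℝ) ^ t := by positivity
  calc (c : ℝ) * (2⁻¹ : ℝ) ^ (2 * t)
      ≤ ((4 * K + 2) * (2 * t).choose t : ℝ) * (2⁻¹ : ℝ) ^ (2 * t) := by
        apply mul_le_mul_of_nonneg_right _ (by positivity)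
        exact_mod_cast hcard
    _ = (4 * (K:ℝ) + 2) * (((2 * t).choose t : ℝ) / (4:ℝ) ^ t) := by
        rw [hpow]
        push_cast
        ring
    _ ≤ (4 * (K:ℝ) + 2) * (1 / Real.sqrt (t + 1)) := by
        apply mul_le_mul_of_nonneg_left _ (by positivity)
        rw [div_le_div_iff₀ h4t hsq, one_mul]
        calc ((2 * t).choose t : ℝ) * Real.sqrt (t + 1)
            ≤ (4 ^ t / Real.sqrt (t + 1)) * Real.sqrt (t + 1) := by
              apply mul_le_mul_of_nonneg_right hchoose (le_of_lt hsq)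
          _ = 4 ^ t := by field_simp
    _ = (4 * (K:ℝ) + 2) / Real.sqrt (t + 1) := by ring

end ProbBound


/-- lower class bound for the local time at zero: For the
simple symmetric random walk with local time at zero
`ξ(0,n) = #{k : 0 < k ≤ n, S k = 0}`, for every `ε > 0`, almost surely for
all sufficiently large `n`, `ξ(0,n) ≥ √n / (log n)^{1+ε}`. -/
theorem stmt14 {Ω : Type*} [MeasurableSpace Ω] (P : Measure Ω)
    [IsProbabilityMeasure P]
    (X : ℕ → Ω → ℤ) (hmeas : ∀ i, Measurable (X i))
    (hindep : iIndepFun X P)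
    (hdist : ∀ i, P {ω | X i ω = 1} = 1/2 ∧ P {ω | X i ω = -1} = 1/2)
    (S : Ω → ℕ → ℤ) (hS : ∀ ω n, S ω n = ∑ i ∈ Finset.range n, X i ω)
    (ξ₀ : Ω → ℕ → ℕ)
    (hξ : ∀ ω n, ξ₀ ω n = ((Finset.Icc 1 n).filter fun k => S ω k = 0).card) :
    ∀ ε : ℝ, 0 < ε →
      ∀ᵐ ω ∂P, ∀ᶠ n : ℕ in atTop,
        (ξ₀ ω n : ℝ) ≥ Real.sqrt n / (Real.log n) ^ ((1 : ℝ) + ε) := by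
  intro ε hε
  set Kf : ℕ → ℕ := fun i => ⌈(2:ℝ)^(i+2) / ((i:ℝ)+1) ^ ((1:ℝ)+ε)⌉₊ with hKf
  set A : ℕ → Set Ω := fun j => {ω | ξ₀ ω (4^(j+1)) < Kf j} with hA
  have hPA : ∀ j, P (A j)
      ≤ ENNReal.ofReal (16 / ((j:ℝ)+1)^((1:ℝ)+ε) + 6 * (2⁻¹:ℝ)^j) := by
    intro j
    have h4 : (4:ℕ)^(j+1) = 2 * (2 * 4^j) := by ring
    have hb := prob_bound_even hmeas hindep hdist S hS ξ₀ hξ (2 * 4^j) (Kf j)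
    rw [← h4] at hb
    refine le_trans hb (ENNReal.ofReal_le_ofReal ?_)
    have hR : (0:ℝ) < ((j:ℝ)+1)^((1:ℝ)+ε) := Real.rpow_pos_of_pos (by positivity) _
    have h2j : (0:ℝ) < (2:ℝ)^j := by positivity
    have hsqrt_ge : (2:ℝ)^j ≤ Real.sqrt ((2 * 4^j : ℕ) + 1) := by
      have h1 : ((2:ℝ)^j)^2 ≤ ((2 * 4^j : ℕ):ℝ) + 1 := by
        have h2 : ((2:ℝ)^j)^2 = (4:ℝ)^j := by
          rw [← pow_mul, mul_comm, pow_mul]; norm_num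
        rw [h2]
        push_cast
        nlinarith [pow_pos (show (0:ℝ) < 4 by norm_num) j]
      calc (2:ℝ)^j = Real.sqrt (((2:ℝ)^j)^2) := (Real.sqrt_sq (by positivity)).symm
        _ ≤ Real.sqrt (((2 * 4^j : ℕ):ℝ) + 1) := Real.sqrt_le_sqrt h1
    have hKle : (Kf j : ℝ) ≤ (2:ℝ)^(j+2) / ((j:ℝ)+1)^((1:ℝ)+ε) + 1 :=
      le_of_lt (Nat.ceil_lt_add_one (by positivity))
    calc (4 * (Kf j : ℝ) + 2) / Real.sqrt ((2 * 4^j : ℕ) + 1)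
        ≤ (4 * (Kf j : ℝ) + 2) / (2:ℝ)^j := by
          apply div_le_div_of_nonneg_left (by positivity) h2j hsqrt_ge
      _ ≤ (4 * ((2:ℝ)^(j+2) / ((j:ℝ)+1)^((1:ℝ)+ε) + 1) + 2) / (2:ℝ)^j := by
          gcongr
      _ = 16 / ((j:ℝ)+1)^((1:ℝ)+ε) + 6 * (2⁻¹:ℝ)^j := by
          have e1 : (2:ℝ)^(j+2) = 4 * 2^j := by rw [pow_add]; ring
          have e2 : ((2:ℝ)⁻¹)^j = ((2:ℝ)^j)⁻¹ := inv_pow 2 j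
          rw [e1, e2]
          field_simp
          ring
  have hsum : Summable (fun j : ℕ => 16 / ((j:ℝ)+1)^((1:ℝ)+ε) + 6 * (2⁻¹:ℝ)^j) := by
    apply Summable.add
    · have h1 : Summable (fun n : ℕ => 1 / (n:ℝ)^((1:ℝ)+ε)) :=
        Real.summable_one_div_nat_rpow.2 (by linarith)
      have h2 : Summable (fun j : ℕ => 1 / (((j+1 : ℕ)):ℝ)^((1:ℝ)+ε)) :=
        h1.comp_injective Nat.succ_injective
      refine Summable.congr (h2.mul_left 16) ?_
      intro j
      push_cast
      ring
    · exact (summable_geometric_of_lt_one (by norm_num) (by norm_num)).mul_left 6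
  have htsum : (∑' j, P (A j)) ≠ ⊤ := by
    have hle := ENNReal.tsum_le_tsum hPA
    rw [← ENNReal.ofReal_tsum_of_nonneg (fun n => by positivity) hsum] at hle
    exact ne_top_of_le_ne_top ENNReal.ofReal_ne_top hle
  filter_upwards [MeasureTheory.ae_eventually_notMem htsum] with ω hω
  obtain ⟨J, hJ⟩ := Filter.eventually_atTop.1 hω
  rw [Filter.eventually_atTop]
  refine ⟨4^(J+2) + 16, fun n hn => ?_⟩
  have hn16 : 16 ≤ n := by
    have : 0 < 4^(J+2) := Nat.pow_pos (by norm_num)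
    omega
  have hn0 : n ≠ 0 := by omega
  set j := Nat.log 4 n with hj
  have hj2 : 2 ≤ j := by
    apply (Nat.le_log_iff_pow_le (by norm_num) hn0).2
    norm_num
    omega
  have hjJ : J + 2 ≤ j := by
    apply (Nat.le_log_iff_pow_le (by norm_num) hn0).2
    omega
  have hlow : 4^j ≤ n := Nat.pow_log_le_self 4 hn0
  have hhigh : n < 4^(j+1) := Nat.lt_pow_succ_log_self (by norm_num) n
  set i := j - 1 with hi
  have hji : j = i + 1 := by omega
  have hKi : Kf i ≤ ξ₀ ω (4^j) := by
    have h1 := hJ i (by omega)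
    rw [hA] at h1
    simp only [Set.mem_setOf_eq, not_lt] at h1
    rwa [hji]
  have hmono : ξ₀ ω (4^j) ≤ ξ₀ ω n := by
    rw [hξ, hξ]
    exact Finset.card_le_card
      (Finset.filter_subset_filter _ (Finset.Icc_subset_Icc_right hlow))
  have hjR : (0:ℝ) < (j:ℝ) := by
    have : 0 < j := by omega
    exact_mod_cast this
  have hlogn : (j:ℝ) ≤ Real.log n := by
    have h1 : ((4:ℝ))^j ≤ (n:ℝ) := by exact_mod_cast hlow
    have h2 : Real.log ((4:ℝ)^j) ≤ Real.log n :=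
      Real.log_le_log (by positivity) h1
    rw [Real.log_pow] at h2
    have h3 : (1:ℝ) ≤ Real.log 4 := by
      have h4 : Real.exp 1 ≤ 4 :=
        le_of_lt (lt_trans Real.exp_one_lt_d9 (by norm_num))
      calc (1:ℝ) = Real.log (Real.exp 1) := (Real.log_exp 1).symm
        _ ≤ Real.log 4 := Real.log_le_log (Real.exp_pos 1) h4
    calc (j:ℝ) = j * 1 := by ring
      _ ≤ j * Real.log 4 := by
          apply mul_le_mul_of_nonneg_left h3 (by positivity)
      _ ≤ Real.log n := h2
  have hrpow : ((j:ℝ))^((1:ℝ)+ε) ≤ (Real.log n)^((1:ℝ)+ε) :=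
    Real.rpow_le_rpow (le_of_lt hjR) hlogn (by linarith)
  have hrpow0 : (0:ℝ) < ((j:ℝ))^((1:ℝ)+ε) := Real.rpow_pos_of_pos hjR _
  have hsqrtn : Real.sqrt n ≤ (2:ℝ)^(j+1) := by
    have h1 : (n:ℝ) ≤ ((2:ℝ)^(j+1))^2 := by
      have h2 : ((2:ℝ)^(j+1))^2 = (4:ℝ)^(j+1) := by
        rw [← pow_mul, mul_comm, pow_mul]; norm_num
      rw [h2]
      exact_mod_cast le_of_lt hhigh
    calc Real.sqrt n ≤ Real.sqrt (((2:ℝ)^(j+1))^2) := Real.sqrt_le_sqrt h1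
      _ = (2:ℝ)^(j+1) := Real.sqrt_sq (by positivity)
  have hchain1 : Real.sqrt n / (Real.log n)^((1:ℝ)+ε)
      ≤ (2:ℝ)^(j+1) / ((j:ℝ))^((1:ℝ)+ε) :=
    div_le_div₀ (by positivity) hsqrtn hrpow0 hrpow
  have hchain2 : (2:ℝ)^(j+1) / ((j:ℝ))^((1:ℝ)+ε) ≤ (Kf i : ℝ) := by
    have h1 : (2:ℝ)^(i+2) / (((i:ℝ))+1)^((1:ℝ)+ε) ≤ (Kf i : ℝ) := Nat.le_ceil _
    rw [hji]
    have h2 : ((i:ℕ) + 1 : ℕ) + 1 = i + 2 := by omega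
    have h3 : (((i+1 : ℕ)):ℝ) = (i:ℝ) + 1 := by push_cast; ring
    rw [h2, h3]
    exact h1
  have hchain3 : (Kf i : ℝ) ≤ (ξ₀ ω (4^j) : ℝ) := by exact_mod_cast hKi
  have hchain4 : ((ξ₀ ω (4^j)) : ℝ) ≤ (ξ₀ ω n : ℝ) := by exact_mod_cast hmono
  rw [ge_iff_le]
  linarith
end
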